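/- arXiv:1908.10824 — 3 statements merged into one kernel-verified Lean document; each statement's English description precedes it below -/
import Mathlib

section
/- Let U ⊆ ℝⁿ be open with a metric g and an affine connection D given by Christoffel symbols Γ, and let D* be the dual connection of D with respect to g. Then for every x ∈ U and all v, w, y, z ∈ ℝⁿ one has g(x)(R^{D*}(x)(y,z)(w), v) = − g(x)(R^D(x)(y,z)(v), w); equivalently, R^{D*}_g(x)(z,w,x',y') = −R^D_g(x)(w,z,x',y') for all arguments. -/
/-!
STATEMENT 1: duality of curvature tensors:
g(x)(R^{D*}(x)(y,z)(w), v) = − g(x)(R^D(x)(y,z)(v), w).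
-/

/-- The curvature tensor of an affine connection with Christoffel symbols `Γ`:
`R^D(x)(v,w)(z) = (fderiv ℝ Γ x v)(w)(z) − (fderiv ℝ Γ x w)(v)(z)
  + Γ(x)(v)(Γ(x)(w)(z)) − Γ(x)(w)(Γ(x)(v)(z))`. -/
noncomputable def curv {n : ℕ}
    (Γ : (Fin n → ℝ) → (Fin n → ℝ) →L[ℝ] (Fin n → ℝ) →L[ℝ] (Fin n → ℝ))
    (x v w z : Fin n → ℝ) : Fin n → ℝ :=
  fderiv ℝ Γ x v w z - fderiv ℝ Γ x w v z + Γ x v (Γ x w z) - Γ x w (Γ x v z)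

set_option maxHeartbeats 1000000 in
set_option synthInstance.maxHeartbeats 400000 in
theorem statement1 (n : ℕ) (hn : 1 ≤ n) (U : Set (Fin n → ℝ)) (hU : IsOpen U)
    -- the metric g : smooth, symmetric, positive definite on U
    (g : (Fin n → ℝ) → (Fin n → ℝ) →L[ℝ] (Fin n → ℝ) →L[ℝ] ℝ)
    (hg : ContDiffOn ℝ (⊤ : ℕ∞) g U)
    (hgsymm : ∀ x ∈ U, ∀ v w : Fin n → ℝ, g x v w = g x w v)
    (hgpos : ∀ x ∈ U, ∀ v : Fin n → ℝ, v ≠ 0 → 0 < g x v v)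
    -- the affine connection D with Christoffel symbols Γ
    (Γ : (Fin n → ℝ) → (Fin n → ℝ) →L[ℝ] (Fin n → ℝ) →L[ℝ] (Fin n → ℝ))
    (hΓ : ContDiffOn ℝ (⊤ : ℕ∞) Γ U)
    -- the dual connection D* with Christoffel symbols Γs
    (Γs : (Fin n → ℝ) → (Fin n → ℝ) →L[ℝ] (Fin n → ℝ) →L[ℝ] (Fin n → ℝ))
    (hΓs : ContDiffOn ℝ (⊤ : ℕ∞) Γs U)
    (hdual : ∀ x ∈ U, ∀ v y z : Fin n → ℝ,
      fderiv ℝ g x v y z = g x (Γs x v y) z + g x y (Γ x v z)) :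
    ∀ x ∈ U, ∀ v w y z : Fin n → ℝ,
      g x (curv Γs x y z w) v = - g x (curv Γ x y z v) w := by
  intro x hx v w y z
  have hxU : U ∈ nhds x := hU.mem_nhds hx
  -- smoothness at x
  have hgx : ContDiffAt ℝ (⊤ : ℕ∞) g x := hg.contDiffAt hxU
  have hΓx : ContDiffAt ℝ (⊤ : ℕ∞) Γ x := hΓ.contDiffAt hxU
  have hΓsx : ContDiffAt ℝ (⊤ : ℕ∞) Γs x := hΓs.contDiffAt hxU
  have hgd : DifferentiableAt ℝ g x := hgx.differentiableAt (by simp)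
  have hΓd : DifferentiableAt ℝ Γ x := hΓx.differentiableAt (by simp)
  have hΓsd : DifferentiableAt ℝ Γs x := hΓsx.differentiableAt (by simp)
  letI : NormedAddCommGroup ((Fin n → ℝ) →L[ℝ] (Fin n → ℝ) →L[ℝ] (Fin n → ℝ) →L[ℝ] ℝ) :=
    @ContinuousLinearMap.toNormedAddCommGroup ℝ ℝ (Fin n → ℝ) ((Fin n → ℝ) →L[ℝ] (Fin n → ℝ) →L[ℝ] ℝ) _ _ _ _ _ _ (RingHom.id ℝ) _
  letI : NormedSpace ℝ ((Fin n → ℝ) →L[ℝ] (Fin n → ℝ) →L[ℝ] (Fin n → ℝ) →L[ℝ] ℝ) :=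
    @ContinuousLinearMap.toNormedSpace ℝ ℝ (Fin n → ℝ) ((Fin n → ℝ) →L[ℝ] (Fin n → ℝ) →L[ℝ] ℝ) _ _ _ _ _ _ (RingHom.id ℝ) _ ℝ _ _ _
  have hGc : ContDiffAt ℝ 1 (fderiv ℝ g) x := hgx.fderiv_right (by norm_cast)
  have hGd : DifferentiableAt ℝ (fderiv ℝ g) x := hGc.differentiableAt one_ne_zero
  -- second derivative is symmetric
  have hev : ∀ᶠ y' in nhds x, HasFDerivAt g (fderiv ℝ g y') y' := by
    filter_upwards [hxU] with x' hx'
    exact ((hg.contDiffAt (hU.mem_nhds hx')).differentiableAt (by simp)).hasFDerivAt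
  have Hsymm : ∀ p q : Fin n → ℝ, fderiv ℝ (fderiv ℝ g) x p q = fderiv ℝ (fderiv ℝ g) x q p :=
    second_derivative_symmetric_of_eventually (𝕜 := ℝ) (E := Fin n → ℝ) (F := (Fin n → ℝ) →L[ℝ] (Fin n → ℝ) →L[ℝ] ℝ) (f := g) (f'' := fderiv ℝ (fderiv ℝ g) x) hev hGd.hasFDerivAt
  -- key: expansion of the second derivative of g via the dual connections
  have key : ∀ p q a b : Fin n → ℝ,
      fderiv ℝ (fderiv ℝ g) x q p a b = g x (Γs x q (Γs x p a)) b + g x (Γs x p a) (Γ x q b)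
        + g x (fderiv ℝ Γs x q p a) b
        + g x (Γs x q a) (Γ x p b) + g x a (Γ x q (Γ x p b))
        + g x a (fderiv ℝ Γ x q p b) := by
    intro p q a b
    -- derivative of x' ↦ fderiv ℝ g x' p a b
    have A := ((HasFDerivAt.clm_apply (𝕜 := ℝ) (E := Fin n → ℝ) (G := Fin n → ℝ) (H := (Fin n → ℝ) →L[ℝ] (Fin n → ℝ) →L[ℝ] ℝ) (c := fderiv ℝ g) hGd.hasFDerivAt (hasFDerivAt_const p x)).clm_apply
        (hasFDerivAt_const a x)).clm_apply (hasFDerivAt_const b x)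
    -- derivative of x' ↦ g x' (Γs x' p a) b
    have B := (hgd.hasFDerivAt.clm_apply
        ((hΓsd.hasFDerivAt.clm_apply (hasFDerivAt_const p x)).clm_apply
          (hasFDerivAt_const a x))).clm_apply (hasFDerivAt_const b x)
    -- derivative of x' ↦ g x' a (Γ x' p b)
    have C := (hgd.hasFDerivAt.clm_apply (hasFDerivAt_const a x)).clm_apply
        ((hΓd.hasFDerivAt.clm_apply (hasFDerivAt_const p x)).clm_apply
          (hasFDerivAt_const b x))
    have heq : (fun x' => g x' (Γs x' p a) b + g x' a (Γ x' p b))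
        =ᶠ[nhds x] (fun x' => fderiv ℝ g x' p a b) := by
      filter_upwards [hxU] with x' hx'
      exact (hdual x' hx' p a b).symm
    have A' := (B.add C).congr_of_eventuallyEq heq.symm
    have hEq := A.unique A'
    have hq := DFunLike.congr_fun hEq q
    simp only [ContinuousLinearMap.add_apply, ContinuousLinearMap.comp_apply,
      ContinuousLinearMap.flip_apply, ContinuousLinearMap.zero_apply, ContinuousLinearMap.map_zero,
      zero_add, add_zero] at hq
    have e1 := hdual x hx q (Γs x p a) b
    have e2 := hdual x hx q a (Γ x p b)
    linarith
  have h1 := key z y w v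
  have h2 := key y z w v
  have hs := DFunLike.congr_fun (DFunLike.congr_fun (Hsymm y z) w) v
  have hsw := hgsymm x hx w (curv Γ x y z v)
  simp only [curv, map_sub, map_add, ContinuousLinearMap.sub_apply,
    ContinuousLinearMap.add_apply] at hsw ⊢
  linarith [h1, h2, hs, hsw]
end

section
/- (Algebraic core of Theorem 4.) Let E be a finite-dimensional real inner product space with orthonormal basis {e_i}, let R : E → E → E → E be a trilinear map, and let ε = 1 or ε = −1. Suppose that for all X, Y, ξ ∈ E one has −½ Σ_i ⟨R(Y, e_i)(ξ), R(X, e_i)(ξ)⟩ = ε · ¼ Σ_{i,j} ⟨R(e_i, e_j)(ξ), X⟩ · ⟨R(e_i, e_j)(ξ), Y⟩. Then R = 0. -/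
/-!
STATEMENT 14 (algebraic core of Theorem 4): if a trilinear map R on a
finite-dimensional real inner product space satisfies
−½ Σ_i ⟨R(Y, e_i)(ξ), R(X, e_i)(ξ)⟩
  = ε · ¼ Σ_{i,j} ⟨R(e_i, e_j)(ξ), X⟫ ⟨R(e_i, e_j)(ξ), Y⟩
for ε = ±1 and all X, Y, ξ, then R = 0.
-/

open scoped BigOperators RealInnerProductSpace

theorem statement14 {E : Type*} [NormedAddCommGroup E] [InnerProductSpace ℝ E]
    [FiniteDimensional ℝ E] {ι : Type*} [Fintype ι]
    (b : OrthonormalBasis ι ℝ E)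
    (R : E →ₗ[ℝ] E →ₗ[ℝ] E →ₗ[ℝ] E)
    (ε : ℝ) (hε : ε = 1 ∨ ε = -1)
    (h : ∀ X Y ξ : E,
      -(1/2) * ∑ i, ⟪R Y (b i) ξ, R X (b i) ξ⟫
        = ε * ((1/4) * ∑ i, ∑ j, ⟪R (b i) (b j) ξ, X⟫ * ⟪R (b i) (b j) ξ, Y⟫)) :
    R = 0 := by
  have key : ∀ (i j : ι) (ξ : E), R (b i) (b j) ξ = 0 := by
    intro i j ξ
    set S : ℝ := ∑ i, ∑ j, ⟪R (b i) (b j) ξ, R (b i) (b j) ξ⟫ with hS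
    have hsum : -(1/2) * S = ε * ((1/4) * S) := by
      have := fun k => h (b k) (b k) ξ
      calc -(1/2) * S
          = ∑ k, -(1/2) * ∑ i, ⟪R (b k) (b i) ξ, R (b k) (b i) ξ⟫ := by
            rw [← Finset.mul_sum]
        _ = ∑ k, ε * ((1/4) * ∑ i, ∑ j, ⟪R (b i) (b j) ξ, b k⟫ * ⟪R (b i) (b j) ξ, b k⟫) := by
            exact Finset.sum_congr rfl fun k _ => this k
        _ = ε * ((1/4) * S) := by
            rw [← Finset.mul_sum, ← Finset.mul_sum]
            congr 2
            rw [Finset.sum_comm]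
            refine Finset.sum_congr rfl fun i _ => ?_
            rw [Finset.sum_comm]
            refine Finset.sum_congr rfl fun j _ => ?_
            rw [← b.sum_inner_mul_inner (R (b i) (b j) ξ) (R (b i) (b j) ξ)]
            exact Finset.sum_congr rfl fun x _ => by rw [real_inner_comm (b x)]
    have hS0 : S = 0 := by rcases hε with rfl | rfl <;> linarith
    have hnn : ∀ k ∈ (Finset.univ : Finset ι),
        0 ≤ ∑ l, ⟪R (b k) (b l) ξ, R (b k) (b l) ξ⟫ :=
      fun k _ => Finset.sum_nonneg fun l _ => real_inner_self_nonneg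
    have h1 := (Finset.sum_eq_zero_iff_of_nonneg hnn).mp hS0 i (Finset.mem_univ i)
    have h2 := (Finset.sum_eq_zero_iff_of_nonneg
      (fun l _ => real_inner_self_nonneg)).mp h1 j (Finset.mem_univ j)
    exact inner_self_eq_zero.mp h2
  apply b.toBasis.ext
  intro i
  apply b.toBasis.ext
  intro j
  ext ξ
  simpa using key i j ξ
end

section
/- (Remark: the Hesse–Einstein factor is constant.) Let n ≥ 2, let U ⊆ ℝⁿ be open and connected, and let φ : U → ℝ be a smooth function whose Hessian matrix H(x) = (∂_i∂_j φ(x)) is positive definite for every x ∈ U. Suppose c : U → ℝ satisfies ½ ∂_i∂_j (log det H)(x) = c(x) · ∂_i∂_j φ(x) for all x ∈ U and all 1 ≤ i, j ≤ n (i.e. the second Koszul form β of the Hessian metric g = Ddφ equals c·g). Then c is constant on U. -/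
open Real Set
open scoped Matrix
open scoped ContDiff

private lemma two_le_infty : (2 : WithTop ℕ∞) ≤ ∞ := WithTop.coe_le_coe.2 le_top

private lemma infty_add_one : (∞ : WithTop ℕ∞) + 1 ≤ ∞ := by norm_num

/-- derivative in a fixed direction of a smooth-on-open-set function is smooth. -/
private lemma clm_apply_contDiffOn {n : ℕ} {U : Set (Fin n → ℝ)} (hU : IsOpen U)
    {f : (Fin n → ℝ) → ℝ} (hf : ContDiffOn ℝ ∞ f U) (v : Fin n → ℝ) :
    ContDiffOn ℝ ∞ (fun x => fderiv ℝ f x v) U := by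
  have h1 : ContDiffOn ℝ ∞ (fderiv ℝ f) U := hf.fderiv_of_isOpen hU infty_add_one
  exact (ContinuousLinearMap.apply ℝ ℝ v).contDiff.comp_contDiffOn h1

/-- symmetry of second derivatives, directional form. -/
private lemma symm3 {n : ℕ} {U : Set (Fin n → ℝ)} (hU : IsOpen U)
    {f : (Fin n → ℝ) → ℝ} (hf : ContDiffOn ℝ ∞ f U) {x : Fin n → ℝ} (hx : x ∈ U)
    (v w : Fin n → ℝ) :
    fderiv ℝ (fun z => fderiv ℝ f z v) x w = fderiv ℝ (fun z => fderiv ℝ f z w) x v := by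
  have hat : ContDiffAt ℝ ∞ f x := hf.contDiffAt (hU.mem_nhds hx)
  have hd : DifferentiableAt ℝ (fderiv ℝ f) x := by
    have h2 : ContDiffAt ℝ (1 : WithTop ℕ∞) (fderiv ℝ f) x :=
      hat.fderiv_right (by exact_mod_cast two_le_infty)
    exact h2.differentiableAt one_ne_zero
  have hsym := (hat.isSymmSndFDerivAt (by rw [minSmoothness_of_isRCLikeNormedField]; exact two_le_infty)).eq
  have e1 : ∀ u : Fin n → ℝ, fderiv ℝ (fun z => fderiv ℝ f z u) x
      = (fderiv ℝ (fderiv ℝ f) x).flip u := by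
    intro u
    have := fderiv_clm_apply (𝕜 := ℝ) (c := fderiv ℝ f) (u := fun _ => u) hd
      (differentiableAt_const u)
    simpa using this
  rw [e1 v, e1 w]
  simp only [ContinuousLinearMap.flip_apply]
  exact hsym w v

private lemma prod_contDiffOn {n : ℕ} {U : Set (Fin n → ℝ)} {ι : Type*} (s : Finset ι)
    (f : ι → (Fin n → ℝ) → ℝ) (hf : ∀ i ∈ s, ContDiffOn ℝ ∞ (f i) U) :
    ContDiffOn ℝ ∞ (fun x => ∏ i ∈ s, f i x) U := by
  classical
  induction s using Finset.induction_on with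
  | empty => simpa using contDiffOn_const
  | insert a s h ih =>
    simp only [Finset.prod_insert h]
    exact (hf a (Finset.mem_insert_self a s)).mul
      (ih fun i hi => hf i (Finset.mem_insert_of_mem hi))

private lemma det_contDiffOn {n : ℕ} {U : Set (Fin n → ℝ)}
    {H : (Fin n → ℝ) → Matrix (Fin n) (Fin n) ℝ}
    (hH : ∀ i j, ContDiffOn ℝ ∞ (fun x => H x i j) U) :
    ContDiffOn ℝ ∞ (fun x => (H x).det) U := by
  have : (fun x => (H x).det)
      = fun x => ∑ σ : Equiv.Perm (Fin n), (Equiv.Perm.sign σ : ℝ) * ∏ i, H x (σ i) i := by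
    funext x; rw [Matrix.det_apply']
  rw [this]
  exact ContDiffOn.sum fun σ _ =>
    contDiffOn_const.mul (prod_contDiffOn _ _ fun i _ => hH (σ i) i)

private lemma ballhalf {E : Type*} [PseudoMetricSpace E] {z w p : E} {ε : ℝ}
    (hw : w ∈ Metric.ball z (ε/2)) (hp : p ∈ Metric.ball w (ε/2)) : p ∈ Metric.ball z ε := by
  rw [Metric.mem_ball] at *
  calc dist p z ≤ dist p w + dist w z := dist_triangle p w z
    _ < ε/2 + ε/2 := add_lt_add hp hw
    _ = ε := by ring

theorem statement15 (n : ℕ) (hn : 2 ≤ n) (U : Set (Fin n → ℝ)) (hU : IsOpen U)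
    (hUconn : IsConnected U)
    (φ : (Fin n → ℝ) → ℝ) (hφ : ContDiffOn ℝ (⊤ : ℕ∞) φ U)
    -- H is the Hessian matrix of φ
    (H : (Fin n → ℝ) → Matrix (Fin n) (Fin n) ℝ)
    (hH : ∀ x i j, H x i j
      = fderiv ℝ (fun y => fderiv ℝ φ y (Pi.single i 1)) x (Pi.single j 1))
    -- H is positive definite on U
    (hpos : ∀ x ∈ U, (H x).PosDef)
    -- the second Koszul form β_{ij} = ½ ∂_i∂_j (log det H) equals c · g, with
    -- g = Hessian of φ
    (c : (Fin n → ℝ) → ℝ)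
    (hc : ∀ x ∈ U, ∀ i j,
      (1/2) * fderiv ℝ (fun y =>
          fderiv ℝ (fun z => Real.log (H z).det) y (Pi.single i 1)) x (Pi.single j 1)
        = c x * H x i j) :
    ∀ x ∈ U, ∀ y ∈ U, c x = c y := by
  classical
  have hφ' : ContDiffOn ℝ ∞ φ U := hφ.of_le (by simp)
  set e : Fin n → (Fin n → ℝ) := fun i => Pi.single i 1 with he
  -- smoothness of entries of H
  have hHs : ∀ i j, ContDiffOn ℝ ∞ (fun x => H x i j) U := by
    intro i j
    have h1 : ContDiffOn ℝ ∞ (fun y => fderiv ℝ φ y (e i)) U :=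
      clm_apply_contDiffOn hU hφ' (e i)
    have h2 := clm_apply_contDiffOn hU h1 (e j)
    exact h2.congr fun x _ => hH x i j
  -- positivity of determinant
  have hdetpos : ∀ x ∈ U, 0 < (H x).det := fun x hx => (hpos x hx).det_pos
  -- ψ = log det H smooth on U
  set ψ : (Fin n → ℝ) → ℝ := fun z => Real.log (H z).det with hψdef
  have hψ : ContDiffOn ℝ ∞ ψ U :=
    (det_contDiffOn hHs).log fun x hx => (hdetpos x hx).ne'
  -- the second Koszul form (times 2)
  set β : (Fin n → ℝ) → Fin n → Fin n → ℝ :=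
    fun x i j => fderiv ℝ (fun y => fderiv ℝ ψ y (e i)) x (e j) with hβdef
  have hβs : ∀ i j, ContDiffOn ℝ ∞ (fun x => β x i j) U := fun i j =>
    clm_apply_contDiffOn hU (clm_apply_contDiffOn hU hψ (e i)) (e j)
  have hc' : ∀ x ∈ U, ∀ i j, (1/2) * β x i j = c x * H x i j := hc
  -- index 0
  have hn0 : 0 < n := by omega
  let i0 : Fin n := ⟨0, hn0⟩
  -- positivity of the diagonal entries
  have hdiag : ∀ x ∈ U, ∀ i, 0 < H x i i := by
    intro x hx i
    have h0 : (Pi.single i 1 : Fin n → ℝ) ≠ 0 := by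
      intro h
      have := congrFun h i
      simp at this
    have := (hpos x hx).dotProduct_mulVec_pos h0
    simpa [dotProduct, Matrix.mulVec, Pi.single_apply, mul_ite, ite_mul,
      Finset.sum_ite_eq, Finset.sum_ite_eq'] using this
  -- the smooth version of c
  set ct : (Fin n → ℝ) → ℝ := fun x => (1/2) * β x i0 i0 / H x i0 i0 with hctdef
  have hceq : ∀ x ∈ U, c x = ct x := by
    intro x hx
    have h1 := hc' x hx i0 i0
    have h2 := (hdiag x hx i0).ne'
    simp only [hctdef]
    rw [h1, mul_div_assoc, div_self h2, mul_one]
  have hcts : ContDiffOn ℝ ∞ ct U :=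
    (contDiffOn_const.mul (hβs i0 i0)).div (hHs i0 i0) fun x hx => (hdiag x hx i0).ne'
  have hctd : DifferentiableOn ℝ ct U := hcts.differentiableOn (by simp)
  -- key: derivative of ct vanishes on U
  have hkey : ∀ x ∈ U, ∀ i j k,
      fderiv ℝ ct x (e k) * H x i j = fderiv ℝ ct x (e j) * H x i k := by
    intro x hx i j k
    -- auxiliary smooth functions
    have hgi : ContDiffOn ℝ ∞ (fun y => fderiv ℝ φ y (e i)) U :=
      clm_apply_contDiffOn hU hφ' (e i)
    have hAi : ContDiffOn ℝ ∞ (fun y => fderiv ℝ ψ y (e i)) U :=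
      clm_apply_contDiffOn hU hψ (e i)
    -- third derivative symmetry for H entries
    have hHfun : ∀ l, (fun z => H z i l) = fun z => fderiv ℝ (fun y => fderiv ℝ φ y (e i)) z (e l) :=
      fun l => funext fun z => hH z i l
    have hTsymm : fderiv ℝ (fun z => H z i j) x (e k) = fderiv ℝ (fun z => H z i k) x (e j) := by
      rw [hHfun j, hHfun k]
      exact symm3 hU hgi hx (e j) (e k)
    have hSsymm : fderiv ℝ (fun z => β z i j) x (e k) = fderiv ℝ (fun z => β z i k) x (e j) := by
      simp only [hβdef]
      exact symm3 hU hAi hx (e j) (e k)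
    -- differentiate the identity ct * H i l = (1/2) β i l at x in direction e m
    have hder : ∀ l m, ct x * fderiv ℝ (fun z => H z i l) x (e m) + H x i l * fderiv ℝ ct x (e m)
        = 2⁻¹ * fderiv ℝ (fun z => β z i l) x (e m) := by
      intro l m
      have hdc : DifferentiableAt ℝ ct x := hctd.differentiableAt (hU.mem_nhds hx)
      have hdH : DifferentiableAt ℝ (fun z => H z i l) x :=
        ((hHs i l).differentiableOn (by simp)).differentiableAt (hU.mem_nhds hx)
      have hdβ : DifferentiableAt ℝ (fun z => β z i l) x :=
        ((hβs i l).differentiableOn (by simp)).differentiableAt (hU.mem_nhds hx)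
      have heq : (fun z => ct z * H z i l) =ᶠ[nhds x] (fun z => (1/2) * β z i l) := by
        filter_upwards [hU.mem_nhds hx] with z hz
        rw [← hceq z hz]
        exact (hc' z hz i l).symm
      have h1 : fderiv ℝ (fun z => ct z * H z i l) x = fderiv ℝ (fun z => (1/2) * β z i l) x :=
        heq.fderiv_eq
      have h2 := fderiv_mul (𝕜 := ℝ) hdc hdH
      have h3 := fderiv_const_mul (𝕜 := ℝ) hdβ (1/2 : ℝ)
      have h4 := congrArg (fun L => L (e m)) (h2.symm.trans (h1.trans h3))
      simpa using h4
    have h1 := hder j k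
    have h2 := hder k j
    rw [hTsymm] at h1
    rw [← hSsymm] at h2
    linear_combination h1 - h2
  have hfzero : ∀ x ∈ U, fderiv ℝ ct x = 0 := by
    intro x hx
    have hker : ∀ k, fderiv ℝ ct x (e k) = 0 := by
      intro k
      by_contra hk
      -- pick j ≠ k
      have hn1 : 1 < n := by omega
      let j : Fin n := if k = i0 then ⟨1, hn1⟩ else i0
      have hjk : j ≠ k := by
        by_cases h : k = i0
        · simp only [j, if_pos h, h]
          intro hcon
          have := congrArg Fin.val hcon
          simp [i0] at this
        · simp only [j, if_neg h]
          exact fun hcon => h hcon.symm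
      -- the vector in the kernel
      set a : Fin n → ℝ := fun l => fderiv ℝ ct x (e l) with ha
      set v : Fin n → ℝ := fun l => a k * (Pi.single j (1:ℝ) : Fin n → ℝ) l - a j * (Pi.single k (1:ℝ) : Fin n → ℝ) l with hv
      have hvne : v ≠ 0 := by
        intro h
        have := congrFun h j
        simp only [hv, Pi.zero_apply] at this
        rw [Pi.single_apply, Pi.single_apply] at this
        simp [hjk] at this
        exact hk this
      have hmv : (H x) *ᵥ v = 0 := by
        funext i
        have hk1 := hkey x hx i j k
        simp only [Matrix.mulVec, dotProduct, hv, Pi.zero_apply]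
        have : ∀ l, H x i l * (a k * (Pi.single j (1:ℝ) : Fin n → ℝ) l - a j * (Pi.single k (1:ℝ) : Fin n → ℝ) l)
            = a k * (H x i l * (Pi.single j (1:ℝ) : Fin n → ℝ) l) - a j * (H x i l * (Pi.single k (1:ℝ) : Fin n → ℝ) l) := by
          intro l; ring
        rw [Finset.sum_congr rfl fun l _ => this l, Finset.sum_sub_distrib,
          ← Finset.mul_sum, ← Finset.mul_sum]
        have hsj : ∑ l, H x i l * (Pi.single j (1:ℝ) : Fin n → ℝ) l = H x i j := by
          simp [Pi.single_apply, mul_ite, Finset.sum_ite_eq, Finset.sum_ite_eq']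
        have hsk : ∑ l, H x i l * (Pi.single k (1:ℝ) : Fin n → ℝ) l = H x i k := by
          simp [Pi.single_apply, mul_ite, Finset.sum_ite_eq, Finset.sum_ite_eq']
        rw [hsj, hsk]
        rw [sub_eq_zero]
        simp only [ha]
        exact hk1
      have := (hpos x hx).dotProduct_mulVec_pos hvne
      rw [hmv] at this
      simp [dotProduct] at this
    -- conclude the CLM is zero
    ext u
    have hu : u = ∑ l, u l • (Pi.single l (1:ℝ) : Fin n → ℝ) := by
      have := pi_eq_sum_univ u
      convert this using 2 with l
      funext m; simp [Pi.single_apply, eq_comm]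
    rw [hu]
    rw [map_sum]
    simp only [map_smul]
    rw [Finset.sum_eq_zero]
    · simp
    · intro l _
      have := hker l
      simp only [he] at this
      simp [this]
  -- local constancy + connectedness
  intro x hx y hy
  rw [hceq x hx, hceq y hy]
  -- ct is locally constant on U
  have hloc : ∀ z ∈ U, ∃ ε > 0, Metric.ball z ε ⊆ U ∧ ∀ w ∈ Metric.ball z ε, ct w = ct z := by
    intro z hz
    obtain ⟨ε, hε, hball⟩ := Metric.isOpen_iff.1 hU z hz
    refine ⟨ε, hε, hball, fun w hw => ?_⟩
    have hconv : Convex ℝ (Metric.ball z ε) := convex_ball z ε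
    refine hconv.is_const_of_fderivWithin_eq_zero (hctd.mono hball) ?_ hw (Metric.mem_ball_self hε)
    intro p hp
    rw [fderivWithin_of_isOpen Metric.isOpen_ball hp]
    exact hfzero p (hball hp)
  -- clopen argument
  set S : Set (Fin n → ℝ) := {z | ∃ ε > 0, Metric.ball z ε ⊆ U ∧
      (∀ w ∈ Metric.ball z ε, ct w = ct x) ∧ ct z = ct x} with hS
  set T : Set (Fin n → ℝ) := {z | ∃ ε > 0, Metric.ball z ε ⊆ U ∧
      (∀ w ∈ Metric.ball z ε, ct w = ct z) ∧ ct z ≠ ct x} with hT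
  have hSopen : IsOpen S := by
    rw [Metric.isOpen_iff]
    intro z hz
    obtain ⟨ε, hε, hball, hconst, hzx⟩ := hz
    refine ⟨ε/2, by positivity, fun w hw => ?_⟩
    have hwz : w ∈ Metric.ball z ε := by
      exact Metric.ball_subset_ball (by linarith) hw
    refine ⟨ε/2, by positivity, ?_, ?_, hconst w hwz⟩
    · intro p hp
      exact hball (ballhalf (E := Fin n → ℝ) hw hp)
    · intro p hp
      exact hconst _ (ballhalf (E := Fin n → ℝ) hw hp)
  have hTopen : IsOpen T := by
    rw [Metric.isOpen_iff]
    intro z hz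
    obtain ⟨ε, hε, hball, hconst, hzx⟩ := hz
    refine ⟨ε/2, by positivity, fun w hw => ?_⟩
    have hwz : w ∈ Metric.ball z ε := by
      exact Metric.ball_subset_ball (by linarith) hw
    refine ⟨ε/2, by positivity, ?_, ?_, by rw [hconst w hwz]; exact hzx⟩
    · intro p hp
      exact hball (ballhalf (E := Fin n → ℝ) hw hp)
    · intro p hp
      have hpz : p ∈ Metric.ball z ε := ballhalf (E := Fin n → ℝ) hw hp
      rw [hconst p hpz, hconst w hwz]
  have hdisj : Disjoint S T := by
    rw [Set.disjoint_left]
    rintro z ⟨_, _, _, _, hzx⟩ ⟨_, _, _, _, hznx⟩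
    exact hznx hzx
  have hUsub : U ⊆ S ∪ T := by
    intro z hz
    obtain ⟨ε, hε, hball, hconst⟩ := hloc z hz
    by_cases h : ct z = ct x
    · left
      exact ⟨ε, hε, hball, fun w hw => (hconst w hw).trans h, h⟩
    · right
      exact ⟨ε, hε, hball, hconst, h⟩
  have hxS : x ∈ S := by
    obtain ⟨ε, hε, hball, hconst⟩ := hloc x hx
    exact ⟨ε, hε, hball, hconst, rfl⟩
  have hUS : U ⊆ S :=
    hUconn.isPreconnected.subset_left_of_subset_union hSopen hTopen hdisj hUsub ⟨x, hx, hxS⟩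
  obtain ⟨_, _, _, _, hyx⟩ := hUS hy
  exact hyx.symm
end
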